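/- (Fannes-type asymptotic continuity) For probability distributions p, q on Fin d with ‖p - q‖₁ ≤ 1/2, |H(p) - H(q)| ≤ ‖p-q‖₁ · log₂ d + h(‖p-q‖₁), where h is the binary entropy function. Consequently, for sequences of distributions p_m, q_m on 2^m points (i.e., d = 2^m) with ‖p_m - q_m‖₁ → 0, we have |H(p_m) - H(q_m)|/m → 0. -/

import Mathlib

open Filter

section FannesAux2718
open Real

private lemma nml_subadd2718 {a b : ℝ} (ha : 0 ≤ a) (hb : 0 ≤ b) :
    negMulLog (a + b) ≤ negMulLog a + negMulLog b := by
  have h1 : -a * log (a + b) ≤ negMulLog a := by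
    rcases eq_or_lt_of_le ha with h | h
    · simp [← h, negMulLog]
    · have := Real.log_le_log h (le_add_of_nonneg_right hb)
      simp only [negMulLog, neg_mul]
      nlinarith
  have h2 : -b * log (a + b) ≤ negMulLog b := by
    rcases eq_or_lt_of_le hb with h | h
    · simp [← h, negMulLog]
    · have := Real.log_le_log h (le_add_of_nonneg_left ha)
      simp only [negMulLog, neg_mul]
      nlinarith
  have : negMulLog (a + b) = -a * log (a + b) + -b * log (a + b) := by
    simp [negMulLog]; ring
  linarith

private lemma nml_one_sub_le2718 {t : ℝ} (h0 : 0 ≤ t) (h2 : t ≤ 1 / 2) :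
    negMulLog (1 - t) ≤ negMulLog t := by
  rcases eq_or_lt_of_le h0 with h | hpos
  · simp [← h]
  have ht1 : t < 1 := by linarith
  by_cases hc : t ≤ Real.exp (-1)
  · have h1t : (0:ℝ) < 1 - t := by linarith
    have hA : negMulLog (1 - t) ≤ t := by
      have hx : (0:ℝ) < 1 / (1 - t) := by positivity
      have := Real.log_le_sub_one_of_pos hx
      rw [Real.log_div one_ne_zero (by linarith)] at this
      simp only [Real.log_one] at this
      simp only [negMulLog, neg_mul]
      have h3 := mul_le_mul_of_nonneg_left this (le_of_lt h1t)
      have h4 : (1 - t) * (1 / (1 - t) - 1) = t := by field_simp; ring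
      nlinarith
    have hB : t ≤ negMulLog t := by
      have : Real.log t ≤ -1 := by
        rw [show (-1:ℝ) = Real.log (Real.exp (-1)) by simp]
        exact Real.log_le_log hpos hc
      simp only [negMulLog, neg_mul]
      nlinarith
    linarith
  · push_neg at hc
    have hlog : -1 ≤ Real.log t := by
      rw [show (-1:ℝ) = Real.log (Real.exp (-1)) by simp]
      exact Real.log_le_log (Real.exp_pos _) hc.le
    have h1t : (0:ℝ) < 1 - t := by linarith
    have hx : (0:ℝ) < t / (1 - t) := by positivity
    have key := Real.log_le_sub_one_of_pos hx
    rw [Real.log_div (ne_of_gt hpos) (ne_of_gt h1t)] at key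
    have key2 : (1 - t) * (Real.log t - Real.log (1 - t)) ≤ 2 * t - 1 := by
      have h3 := mul_le_mul_of_nonneg_left key (le_of_lt h1t)
      have h4 : (1 - t) * (t / (1 - t) - 1) = 2 * t - 1 := by field_simp; ring
      nlinarith
    simp only [negMulLog, neg_mul]
    nlinarith [mul_nonneg (by linarith : (0:ℝ) ≤ 1 - 2*t) (by linarith : (0:ℝ) ≤ Real.log t + 1)]

private lemma nml_le_add2718 {x t : ℝ} (hx : 0 ≤ x) (ht : 0 ≤ t) (hxt : x + t ≤ 1) :
    negMulLog x ≤ negMulLog (x + t) + negMulLog (1 - t) := by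
  rcases eq_or_lt_of_le ht with h | htpos
  · simp [← h]
  have hx1 : x < 1 := by linarith
  set l : ℝ := t / (1 - x) with hl
  have h1x : (0:ℝ) < 1 - x := by linarith
  have hl0 : 0 ≤ l := by positivity
  have hl1 : l ≤ 1 := by rw [hl, div_le_one h1x]; linarith
  have hcc := Real.concaveOn_negMulLog.2
  have m1 : x + t = (1 - l) • x + l • (1:ℝ) := by
    simp only [smul_eq_mul, hl]; field_simp; ring
  have m2 : 1 - t = l • x + (1 - l) • (1:ℝ) := by
    simp only [smul_eq_mul, hl]; field_simp; ring
  have c1 : (1 - l) • negMulLog x + l • negMulLog 1 ≤ negMulLog (x + t) := by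
    rw [m1]
    exact hcc (Set.mem_Ici.2 hx) (Set.mem_Ici.2 zero_le_one) (by linarith) hl0 (by ring)
  have c2 : l • negMulLog x + (1 - l) • negMulLog 1 ≤ negMulLog (1 - t) := by
    rw [m2]
    exact hcc (Set.mem_Ici.2 hx) (Set.mem_Ici.2 zero_le_one) hl0 (by linarith) (by ring)
  simp only [Real.negMulLog_one, smul_eq_mul, mul_zero, add_zero] at c1 c2
  nlinarith

private lemma abs_nml_sub2718 {x y : ℝ} (hx0 : 0 ≤ x) (hx1 : x ≤ 1) (hy0 : 0 ≤ y) (hy1 : y ≤ 1)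
    (hd : |x - y| ≤ 1 / 2) : |negMulLog x - negMulLog y| ≤ negMulLog |x - y| := by
  wlog hxy : x ≤ y generalizing x y
  · rw [abs_sub_comm, abs_sub_comm x y]
    exact this hy0 hy1 hx0 hx1 (by rwa [abs_sub_comm]) (by linarith)
  set t := y - x with htd
  have ht0 : 0 ≤ t := by linarith
  have habs : |x - y| = t := by rw [abs_of_nonpos (by linarith)]; ring
  rw [habs] at hd ⊢
  rw [abs_le]
  constructor
  · have h1 := nml_subadd2718 hx0 ht0
    have : x + t = y := by ring
    rw [this] at h1
    linarith
  · have h1 := nml_le_add2718 hx0 ht0 (by linarith : x + t ≤ 1)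
    have h2 := nml_one_sub_le2718 ht0 (by linarith)
    have : x + t = y := by ring
    rw [this] at h1
    linarith

private lemma sum_nml_le_log2718 {d : ℕ} (hd : 0 < d) (r : Fin d → ℝ) (hr : ∀ i, 0 ≤ r i)
    (hs : ∑ i, r i = 1) : ∑ i, negMulLog (r i) ≤ Real.log d := by
  have hdr : (0:ℝ) < d := Nat.cast_pos.2 hd
  have key : ∀ i, negMulLog (r i) ≤ r i * Real.log d + 1 / d - r i := by
    intro i
    rcases eq_or_lt_of_le (hr i) with h | h
    · simp only [← h, negMulLog_zero, zero_mul, zero_add, sub_zero]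
      positivity
    · have hx : (0:ℝ) < 1 / (r i * d) := by positivity
      have hlog := Real.log_le_sub_one_of_pos hx
      rw [Real.log_div one_ne_zero (by positivity), Real.log_one,
        Real.log_mul (ne_of_gt h) (ne_of_gt hdr)] at hlog
      have h2 := mul_le_mul_of_nonneg_left hlog (le_of_lt h)
      have h3 : r i * (1 / (r i * d) - 1) = 1 / d - r i := by field_simp
      simp only [negMulLog, neg_mul]
      nlinarith
  calc ∑ i, negMulLog (r i) ≤ ∑ i, (r i * Real.log d + 1 / d - r i) :=
        Finset.sum_le_sum fun i _ => key i
    _ = Real.log d := by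
        rw [Finset.sum_sub_distrib, Finset.sum_add_distrib, ← Finset.sum_mul, hs,
          Finset.sum_const, Finset.card_univ, Fintype.card_fin]
        have : (d:ℝ) ≠ 0 := ne_of_gt hdr
        simp only [nsmul_eq_mul, one_mul]
        field_simp; ring

private lemma sum_nml_le2718 {d : ℕ} (hd : 0 < d) (e : Fin d → ℝ) (he : ∀ i, 0 ≤ e i) :
    ∑ i, negMulLog (e i) ≤ (∑ i, e i) * Real.log d + negMulLog (∑ i, e i) := by
  set ε := ∑ i, e i with hε
  have hεnn : 0 ≤ ε := Finset.sum_nonneg fun i _ => he i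
  rcases eq_or_lt_of_le hεnn with h | hpos
  · have hall : ∀ i ∈ Finset.univ, e i = 0 :=
      (Finset.sum_eq_zero_iff_of_nonneg fun i _ => he i).1 h.symm
    have : ∑ i, negMulLog (e i) = 0 := Finset.sum_eq_zero fun i hi => by
      rw [hall i hi]; exact Real.negMulLog_zero
    rw [this, ← h]
    simp
  · have hident : ∀ i, negMulLog (e i) = ε * negMulLog (e i / ε) + (e i / ε) * negMulLog ε := by
      intro i
      rcases eq_or_lt_of_le (he i) with h | h
      · simp [← h]
      · simp only [negMulLog, neg_mul]
        rw [Real.log_div (ne_of_gt h) (ne_of_gt hpos)]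
        field_simp
        ring
    rw [Finset.sum_congr rfl fun i _ => hident i, Finset.sum_add_distrib,
      ← Finset.mul_sum, ← Finset.sum_mul, ← Finset.sum_div, ← hε, div_self (ne_of_gt hpos),
      one_mul]
    have hmax : ∑ i, negMulLog (e i / ε) ≤ Real.log d := by
      apply sum_nml_le_log2718 hd
      · exact fun i => div_nonneg (he i) hεnn
      · rw [← Finset.sum_div, ← hε, div_self (ne_of_gt hpos)]
    have := mul_le_mul_of_nonneg_left hmax hεnn
    linarith

end FannesAux2718

def IsProbDist {α : Type*} [Fintype α] (p : α → ℝ) : Prop :=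
  (∀ i, 0 ≤ p i) ∧ ∑ i, p i = 1

noncomputable def shannonH {α : Type*} [Fintype α] (p : α → ℝ) : ℝ :=
  -∑ i, p i * Real.logb 2 (p i)

/-- Binary entropy function. -/
noncomputable def binEnt (x : ℝ) : ℝ :=
  -x * Real.logb 2 x - (1 - x) * Real.logb 2 (1 - x)

private lemma shannonH_eq2718 {α : Type*} [Fintype α] (p : α → ℝ) :
    shannonH p = (∑ i, Real.negMulLog (p i)) / Real.log 2 := by
  rw [shannonH, Finset.sum_div, ← Finset.sum_neg_distrib]
  exact Finset.sum_congr rfl fun i _ => by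
    simp only [Real.negMulLog, Real.logb]; ring

private lemma binEnt_eq2718 (x : ℝ) :
    binEnt x = (Real.negMulLog x + Real.negMulLog (1 - x)) / Real.log 2 := by
  simp only [binEnt, Real.negMulLog, Real.logb]
  ring

private lemma binEnt_nonneg2718 {x : ℝ} (h0 : 0 ≤ x) (h1 : x ≤ 1) : 0 ≤ binEnt x := by
  rw [binEnt_eq2718]
  have := Real.log_pos one_lt_two
  exact div_nonneg (add_nonneg (Real.negMulLog_nonneg h0 h1)
    (Real.negMulLog_nonneg (by linarith) (by linarith))) this.le

/-- Fannes-type continuity of the Shannon entropy, and the resulting asymptotic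
continuity of the entropy density. -/
theorem fannes_asymptotic_continuity :
    (∀ (d : ℕ), 0 < d → ∀ p q : Fin d → ℝ, IsProbDist p → IsProbDist q →
      (∑ i, |p i - q i|) ≤ 1 / 2 →
      |shannonH p - shannonH q| ≤
        (∑ i, |p i - q i|) * Real.logb 2 (d : ℝ) + binEnt (∑ i, |p i - q i|)) ∧
    (∀ (P Q : (m : ℕ) → Fin (2 ^ m) → ℝ),
      (∀ m, IsProbDist (P m)) → (∀ m, IsProbDist (Q m)) →
      Tendsto (fun m => ∑ i, |P m i - Q m i|) atTop (nhds 0) →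
      Tendsto (fun m => |shannonH (P m) - shannonH (Q m)| / m) atTop (nhds 0)) := by
  have hlog2 : (0:ℝ) < Real.log 2 := Real.log_pos one_lt_two
  have part1 : ∀ (d : ℕ), 0 < d → ∀ p q : Fin d → ℝ, IsProbDist p → IsProbDist q →
      (∑ i, |p i - q i|) ≤ 1 / 2 →
      |shannonH p - shannonH q| ≤
        (∑ i, |p i - q i|) * Real.logb 2 (d : ℝ) + binEnt (∑ i, |p i - q i|) := by
    intro d hd p q hp hq hε
    set ε := ∑ i, |p i - q i| with hεdef
    have hεnn : 0 ≤ ε := Finset.sum_nonneg fun i _ => abs_nonneg _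
    have hp1 : ∀ i, p i ≤ 1 := fun i => by
      rw [← hp.2]; exact Finset.single_le_sum (fun j _ => hp.1 j) (Finset.mem_univ i)
    have hq1 : ∀ i, q i ≤ 1 := fun i => by
      rw [← hq.2]; exact Finset.single_le_sum (fun j _ => hq.1 j) (Finset.mem_univ i)
    have hei : ∀ i, |p i - q i| ≤ 1 / 2 := fun i =>
      le_trans (Finset.single_le_sum (f := fun j => |p j - q j|)
        (fun j _ => abs_nonneg _) (Finset.mem_univ i)) hε
    have step1 : |∑ i, Real.negMulLog (p i) - ∑ i, Real.negMulLog (q i)|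
        ≤ ∑ i, Real.negMulLog |p i - q i| := by
      rw [← Finset.sum_sub_distrib]
      refine (Finset.abs_sum_le_sum_abs _ _).trans (Finset.sum_le_sum fun i _ => ?_)
      exact abs_nml_sub2718 (hp.1 i) (hp1 i) (hq.1 i) (hq1 i) (hei i)
    have step2 : ∑ i, Real.negMulLog |p i - q i| ≤ ε * Real.log d + Real.negMulLog ε :=
      sum_nml_le2718 hd _ fun i => abs_nonneg _
    have step3 : 0 ≤ Real.negMulLog (1 - ε) :=
      Real.negMulLog_nonneg (by linarith) (by linarith)
    rw [shannonH_eq2718, shannonH_eq2718, ← sub_div, binEnt_eq2718, abs_div,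
      abs_of_pos hlog2, Real.logb]
    have heq : ε * (Real.log d / Real.log 2)
        + (Real.negMulLog ε + Real.negMulLog (1 - ε)) / Real.log 2
        = (ε * Real.log d + Real.negMulLog ε + Real.negMulLog (1 - ε)) / Real.log 2 := by
      ring
    rw [heq, div_le_div_iff_of_pos_right hlog2]
    linarith
  refine ⟨part1, ?_⟩
  intro P Q hP hQ hT
  set ε : ℕ → ℝ := fun m => ∑ i, |P m i - Q m i| with hεdef
  have hεnn : ∀ m, 0 ≤ ε m := fun m => Finset.sum_nonneg fun i _ => abs_nonneg _
  have hbin0 : binEnt 0 = 0 := by simp [binEnt]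
  have hcont : Continuous binEnt := by
    have : binEnt = fun x => (Real.negMulLog x + Real.negMulLog (1 - x)) / Real.log 2 :=
      funext binEnt_eq2718
    rw [this]
    exact (Real.continuous_negMulLog.add
      (Real.continuous_negMulLog.comp (continuous_const.sub continuous_id))).div_const _
  have hbound : Tendsto (fun m => ε m + binEnt (ε m)) atTop (nhds 0) := by
    have h2 : Tendsto (fun m => binEnt (ε m)) atTop (nhds (binEnt 0)) :=
      (hcont.continuousAt).tendsto.comp hT
    rw [hbin0] at h2
    simpa using hT.add h2
  apply squeeze_zero' (Eventually.of_forall fun m => by positivity) ?_ hbound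
  have hev1 : ∀ᶠ m in atTop, ε m ≤ 1/2 :=
    hT.eventually (eventually_le_nhds (by norm_num : (0:ℝ) < 1/2))
  filter_upwards [hev1, eventually_ge_atTop 1] with m h12 hm1
  have hb := part1 (2^m) (by positivity) (P m) (Q m) (hP m) (hQ m) h12
  have hlogb : Real.logb 2 (((2^m : ℕ)) : ℝ) = m := by
    push_cast
    rw [Real.logb_pow, Real.logb_self_eq_one one_lt_two, mul_one]
  rw [hlogb] at hb
  have hm : (1:ℝ) ≤ (m:ℝ) := by exact_mod_cast hm1
  have hmpos : (0:ℝ) < (m:ℝ) := by linarith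
  have hm0 : (m:ℝ) ≠ 0 := ne_of_gt hmpos
  have hbnn : 0 ≤ binEnt (ε m) := binEnt_nonneg2718 (hεnn m) (by linarith)
  calc |shannonH (P m) - shannonH (Q m)| / (m:ℝ)
      ≤ (ε m * (m:ℝ) + binEnt (ε m)) / (m:ℝ) := by gcongr
    _ = ε m + binEnt (ε m) / (m:ℝ) := by field_simp
    _ ≤ ε m + binEnt (ε m) := by nlinarith [div_le_self hbnn hm]
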